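/- Let B ≥ 2 and let m be an odd integer with 3 ≤ m ≤ 2B−1. Consider the equiangular azimuth samples φ_p = 2π(p−1)/(m−1) for p = 1,…,m, together with any elevations θ_1,…,θ_m ∈ [0,π] such that all columns of the spherical-harmonic sensing matrix A ∈ ℂ^{m×B^2} are nonzero. Then μ(A) = 1; in particular, the two columns corresponding to orders k = (m−1)/2 and k = −(m−1)/2 of any common degree l ≥ (m−1)/2 are proportional. -/

import Mathlib

open scoped Real BigOperators

/-- Associated Legendre polynomial `P_l^k(x)` for integer order `k` (possibly negative). -/
noncomputable def assocLegendre (l : ℕ) (k : ℤ) (x : ℝ) : ℝ :=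
  ((-1 : ℝ) ^ k / (2 ^ l * (Nat.factorial l : ℝ))) * (1 - x ^ 2) ^ ((k : ℝ) / 2) *
    iteratedDeriv (k + (l : ℤ)).toNat (fun y : ℝ => (y ^ 2 - 1) ^ l) x

/-- Normalization factor of spherical harmonics. -/
noncomputable def shNormFactor (l : ℕ) (k : ℤ) : ℝ :=
  Real.sqrt ((2 * (l : ℝ) + 1) / (4 * Real.pi) *
    ((Nat.factorial ((l : ℤ) - k).toNat : ℝ) / (Nat.factorial ((l : ℤ) + k).toNat : ℝ)))

/-- Spherical harmonic `Y_l^k(θ,φ)`. -/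
noncomputable def sphericalHarmonic (l : ℕ) (k : ℤ) (θ φ : ℝ) : ℂ :=
  ((shNormFactor l k * assocLegendre l k (Real.cos θ) : ℝ) : ℂ) *
    Complex.exp (Complex.I * (k : ℂ) * (φ : ℂ))

/-- Jacobi polynomial `P_α^{(ξ,λ)}(x)`. -/
noncomputable def jacobiP (a ξ lam : ℕ) (x : ℝ) : ℝ :=
  ((-1 : ℝ) ^ a / (2 ^ a * (Nat.factorial a : ℝ))) * (1 - x) ^ (-(ξ : ℤ)) *
    (1 + x) ^ (-(lam : ℤ)) *
    iteratedDeriv a (fun y : ℝ => (1 - y) ^ ξ * (1 + y) ^ lam * (1 - y ^ 2) ^ a) x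

/-- The coefficient `γ = α!(α+ξ+λ)!/((α+ξ)!(α+λ)!)`. -/
noncomputable def jacobiGamma (a ξ lam : ℕ) : ℝ :=
  ((Nat.factorial a : ℝ) * (Nat.factorial (a + ξ + lam) : ℝ)) /
    ((Nat.factorial (a + ξ) : ℝ) * (Nat.factorial (a + lam) : ℝ))

/-- Wigner d-function `d_l^{k,n}(cos θ)` (as a function of `θ`). -/
noncomputable def wignerd (l : ℕ) (k n : ℤ) (θ : ℝ) : ℝ :=
  let ξ : ℕ := (k - n).natAbs
  let lam : ℕ := (k + n).natAbs
  let a : ℕ := l - (ξ + lam) / 2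
  let ω : ℝ := if k ≤ n then 1 else (-1 : ℝ) ^ (n - k)
  ω * Real.sqrt (jacobiGamma a ξ lam) * (Real.sin (θ / 2)) ^ ξ * (Real.cos (θ / 2)) ^ lam *
    jacobiP a ξ lam (Real.cos θ)

/-- Wigner D-function `D_l^{k,n}(θ,φ,χ)`. -/
noncomputable def wignerD (l : ℕ) (k n : ℤ) (θ φ χ : ℝ) : ℂ :=
  ((Real.sqrt ((2 * (l : ℝ) + 1) / (8 * Real.pi ^ 2)) : ℝ) : ℂ) *
    Complex.exp (-(Complex.I * (k : ℂ) * (φ : ℂ))) * ((wignerd l k n θ : ℝ) : ℂ) *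
    Complex.exp (-(Complex.I * (n : ℂ) * (χ : ℂ)))

/-- Column index set for the spherical-harmonic sensing matrix: pairs `(l,k)`,
`0 ≤ l ≤ B-1`, `-l ≤ k ≤ l`.  It has `B^2` elements. -/
abbrev SHIndex (B : ℕ) := Σ l : Fin B, ↥(Set.Icc (-(l.1 : ℤ)) (l.1 : ℤ))

/-- Column index set for the Wigner-D sensing matrix: triples `(l,k,n)`,
`0 ≤ l ≤ B-1`, `-l ≤ k,n ≤ l`.  It has `B(2B-1)(2B+1)/3` elements. -/
abbrev WDIndex (B : ℕ) :=
  Σ l : Fin B, ↥(Set.Icc (-(l.1 : ℤ)) (l.1 : ℤ)) × ↥(Set.Icc (-(l.1 : ℤ)) (l.1 : ℤ))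

/-- The spherical-harmonic sensing matrix. -/
noncomputable def shMatrix {m : ℕ} (B : ℕ) (θ φ : Fin m → ℝ) :
    Matrix (Fin m) (SHIndex B) ℂ :=
  fun p i => sphericalHarmonic i.1.1 i.2.1 (θ p) (φ p)

/-- The Wigner-D sensing matrix. -/
noncomputable def wdMatrix {m : ℕ} (B : ℕ) (θ φ χ : Fin m → ℝ) :
    Matrix (Fin m) (WDIndex B) ℂ :=
  fun p i => wignerD i.1.1 i.2.1.1 i.2.2.1 (θ p) (φ p) (χ p)

/-- Mutual coherence of a matrix: the supremum over pairs of distinct columns of the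
normalized absolute inner product. -/
noncomputable def mutualCoherence {m : ℕ} {ι : Type*} (A : Matrix (Fin m) ι ℂ) : ℝ :=
  sSup {x : ℝ | ∃ i j : ι, i ≠ j ∧
    x = ‖∑ p, (starRingEnd ℂ) (A p i) * A p j‖ /
        (Real.sqrt (∑ p, Complex.normSq (A p i)) * Real.sqrt (∑ p, Complex.normSq (A p j)))}

/-!
With `m = 2K + 1` the azimuths are `φ_p = π p / K`, so `e^{iKφ_p} = (-1)^p` is real and `Y_l^K`
is real-valued at every sample. The symmetry `Y_l^{-k} = (-1)^k conj (Y_l^k)`, which comes from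
the Rodrigues-formula identity `(l+k)! D^{l-k}(x²-1)^l = (l-k)! (x²-1)^k D^{l+k}(x²-1)^l`, then
makes the columns `(l, -K)` and `(l, K)` proportional, and two proportional nonzero columns attain
the Cauchy–Schwarz bound `1` on the coherence.
-/

open Polynomial in
theorem Polynomial.iteratedDeriv_eval {𝕜 : Type*} [NontriviallyNormedField 𝕜] (p : 𝕜[X])
    (n : ℕ) :
    iteratedDeriv n (fun x => p.eval x) = fun x => (derivative^[n] p).eval x := by
  induction n with
  | zero => simp
  | succ n ih =>
    rw [iteratedDeriv_succ, ih, Function.iterate_succ_apply']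
    ext x
    exact Polynomial.deriv _

theorem Nat.factorial_mul_choose_mul_descFactorial_comm {l k i : ℕ} (hi : k + i ≤ l) :
    (l + k).factorial * ((l - k).choose i * (l.descFactorial (l - k - i) * l.descFactorial i)) =
      (l - k).factorial *
        ((l + k).choose (k + i) * (l.descFactorial (l - i) * l.descFactorial (k + i))) := by
  suffices h : ((l + k).factorial *
      ((l - k).choose i * (l.descFactorial (l - k - i) * l.descFactorial i)) : ℚ) =
      (l - k).factorial *
        ((l + k).choose (k + i) * (l.descFactorial (l - i) * l.descFactorial (k + i))) by
    exact_mod_cast h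
  simp only [Nat.descFactorial_eq_factorial_mul_choose, Nat.cast_mul,
    Nat.cast_choose ℚ (by omega : i ≤ l - k), Nat.cast_choose ℚ (by omega : k + i ≤ l + k),
    Nat.cast_choose ℚ (Nat.sub_le l (k + i)), Nat.cast_choose ℚ (by omega : i ≤ l),
    Nat.cast_choose ℚ (by omega : l - i ≤ l), Nat.cast_choose ℚ hi,
    show l - k - i = l - (k + i) by omega, show l + k - (k + i) = l - i by omega,
    Nat.sub_sub_self hi, Nat.sub_sub_self (by omega : i ≤ l)]
  field_simp

open Polynomial in
theorem Polynomial.factorial_mul_iterate_derivative_X_sq_sub_one_pow {R : Type*} [CommRing R]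
    {l k : ℕ} (hk : k ≤ l) :
    ((l + k).factorial : R[X]) * derivative^[l - k] ((X ^ 2 - 1) ^ l) =
      ((l - k).factorial : R[X]) * ((X ^ 2 - 1) ^ k * derivative^[l + k] ((X ^ 2 - 1) ^ l)) := by
  have hsub : ∀ n j : ℕ,
      derivative^[j] ((X - 1 : R[X]) ^ n) = n.descFactorial j • (X - 1) ^ (n - j) :=
    fun n j => by simpa using iterate_derivative_X_sub_pow n j (1 : R)
  have hadd : ∀ n j : ℕ,
      derivative^[j] ((X + 1 : R[X]) ^ n) = n.descFactorial j • (X + 1) ^ (n - j) :=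
    fun n j => by simpa using iterate_derivative_X_add_pow n j (1 : R)
  rw [show (X ^ 2 - 1 : R[X]) = (X - 1) * (X + 1) by ring, mul_pow, mul_pow,
    iterate_derivative_mul, iterate_derivative_mul, Finset.mul_sum, Finset.mul_sum, Finset.mul_sum]
  -- Leibniz: only the terms in which neither factor is differentiated more than `l` times survive.
  have hvanish : ∀ j ∈ Finset.range (l + k + 1), j ∉ Finset.Ico k (l + 1) →
      ((l - k).factorial : R[X]) * ((X - 1) ^ k * (X + 1) ^ k *
        ((l + k).choose j •
          (derivative^[l + k - j] ((X - 1) ^ l) * derivative^[j] ((X + 1) ^ l)))) = 0 := by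
    intro j hj hj'
    simp only [Finset.mem_Ico, Finset.mem_range, not_and_or, not_le, not_lt] at hj hj'
    rcases hj' with h | h
    · simp [hsub, Nat.descFactorial_eq_zero_iff_lt.mpr (by omega : l < l + k - j)]
    · simp [hadd, Nat.descFactorial_eq_zero_iff_lt.mpr (by omega : l < j)]
  have hIco : Finset.Ico k (l + 1) ⊆ Finset.range (l + k + 1) := fun j hj => by
    simp only [Finset.mem_Ico, Finset.mem_range] at hj ⊢; omega
  rw [← Finset.sum_subset hIco hvanish, Finset.sum_Ico_eq_sum_range,
    show l + 1 - k = l - k + 1 by omega]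
  refine Finset.sum_congr rfl fun i hi => ?_
  have hi : k + i ≤ l := by simp only [Finset.mem_range] at hi; omega
  have hcoeff :=
    congrArg (Nat.cast : ℕ → R[X]) (Nat.factorial_mul_choose_mul_descFactorial_comm hi)
  simp only [hsub, hadd, nsmul_eq_mul, Nat.cast_mul] at hcoeff ⊢
  rw [show l - (l - k - i) = k + i by omega, show l + k - (k + i) = l - i by omega,
    show l - (l - i) = i by omega, show l - (k + i) = l - k - i by omega]
  rw [show l - i = l - k - i + k by omega] at hcoeff ⊢
  linear_combination ((X - 1 : R[X]) ^ (k + i) * (X + 1) ^ (l - k - i) * (X + 1) ^ k) * hcoeff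

-- At `t = 0` this uses `0 ^ r = 0` for `r ≠ 0`, as `assocLegendre` does at `x = ±1`.
theorem Real.rpow_neg_div_two_mul_pow {t : ℝ} (ht : 0 ≤ t) (n : ℕ) :
    t ^ (-(n : ℝ) / 2) * t ^ n = t ^ ((n : ℝ) / 2) := by
  rcases ht.eq_or_lt with rfl | ht
  · rcases n.eq_zero_or_pos with rfl | hn
    · simp
    · simp [Real.zero_rpow (by positivity : (n : ℝ) / 2 ≠ 0), hn.ne']
  · rw [← Real.rpow_natCast, ← Real.rpow_add ht]
    ring_nf

open Polynomial in
theorem iteratedDeriv_X_sq_sub_one_pow_sub {l k : ℕ} (hk : k ≤ l) (x : ℝ) :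
    iteratedDeriv (l - k) (fun y : ℝ => (y ^ 2 - 1) ^ l) x =
      (l - k).factorial / (l + k).factorial *
        ((x ^ 2 - 1) ^ k * iteratedDeriv (l + k) (fun y : ℝ => (y ^ 2 - 1) ^ l) x) := by
  have hpoly : (fun y : ℝ => (y ^ 2 - 1) ^ l) = fun y => ((X ^ 2 - 1 : ℝ[X]) ^ l).eval y := by
    simp
  have h := congrArg (eval x) (factorial_mul_iterate_derivative_X_sq_sub_one_pow (R := ℝ) hk)
  simp only [eval_mul, eval_natCast, eval_pow, eval_sub, eval_one, eval_X] at h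
  rw [hpoly, Polynomial.iteratedDeriv_eval, Polynomial.iteratedDeriv_eval]
  have : ((l + k).factorial : ℝ) ≠ 0 := by positivity
  field_simp
  linear_combination h

theorem assocLegendre_neg {l k : ℕ} (hk : k ≤ l) {x : ℝ} (hx : x ^ 2 ≤ 1) :
    assocLegendre l (-k) x =
      (-1) ^ k * ((l - k).factorial / (l + k).factorial) * assocLegendre l k x := by
  unfold assocLegendre
  rw [show (-(k : ℤ) + l).toNat = l - k by omega, show ((k : ℤ) + l).toNat = l + k by omega,
    iteratedDeriv_X_sq_sub_one_pow_sub hk, show x ^ 2 - 1 = -(1 - x ^ 2) by ring, neg_pow]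
  push_cast
  rw [← Real.rpow_neg_div_two_mul_pow (by linarith : 0 ≤ 1 - x ^ 2) k, zpow_neg, zpow_natCast,
    ← inv_pow, inv_neg, inv_one]
  ring

theorem shNormFactor_neg {l k : ℕ} (hk : k ≤ l) :
    shNormFactor l (-k) = (l + k).factorial / (l - k).factorial * shNormFactor l k := by
  unfold shNormFactor
  rw [show ((l : ℤ) - -(k : ℤ)).toNat = l + k by omega,
    show ((l : ℤ) + -(k : ℤ)).toNat = l - k by omega,
    show ((l : ℤ) - k).toNat = l - k by omega, show ((l : ℤ) + k).toNat = l + k by omega]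
  have ha : (0 : ℝ) < (l + k).factorial := by positivity
  have hb : (0 : ℝ) < (l - k).factorial := by positivity
  set c := (2 * (l : ℝ) + 1) / (4 * π)
  rw [show c * ((l + k).factorial / (l - k).factorial) =
      ((l + k).factorial / (l - k).factorial : ℝ) ^ 2 *
        (c * ((l - k).factorial / (l + k).factorial)) by
    field_simp, Real.sqrt_mul (sq_nonneg _), Real.sqrt_sq (by positivity)]

theorem sphericalHarmonic_neg {l k : ℕ} (hk : k ≤ l) (θ φ : ℝ) :
    sphericalHarmonic l (-k) θ φ =
      (-1) ^ k * (starRingEnd ℂ) (sphericalHarmonic l k θ φ) := by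
  have hreal : shNormFactor l (-k) * assocLegendre l (-k) (Real.cos θ) =
      (-1) ^ k * (shNormFactor l k * assocLegendre l k (Real.cos θ)) := by
    rw [shNormFactor_neg hk, assocLegendre_neg hk (Real.cos_sq_le_one θ)]
    have ha : ((l + k).factorial : ℝ) ≠ 0 := by positivity
    have hb : ((l - k).factorial : ℝ) ≠ 0 := by positivity
    field_simp
  unfold sphericalHarmonic
  rw [hreal, map_mul, Complex.conj_ofReal, ← Complex.exp_conj]
  push_cast
  simp only [map_mul, Complex.conj_I, Complex.conj_natCast, Complex.conj_ofReal]
  ring_nf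

theorem conj_sphericalHarmonic_of_mul_eq {l : ℕ} {k n : ℤ} {θ φ : ℝ}
    (h : (k : ℝ) * φ = π * n) :
    (starRingEnd ℂ) (sphericalHarmonic l k θ φ) = sphericalHarmonic l k θ φ := by
  unfold sphericalHarmonic
  rw [map_mul, Complex.conj_ofReal, ← Complex.exp_conj]
  congr 1
  rw [Complex.exp_eq_exp_iff_exists_int]
  refine ⟨-n, ?_⟩
  have hC := congrArg (fun r : ℝ => (r : ℂ)) h
  push_cast at hC ⊢
  simp only [map_mul, Complex.conj_I, map_intCast, Complex.conj_ofReal]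
  linear_combination (-2 * Complex.I) * hC

section Coherence

variable {ι : Type*} [Fintype ι]

theorem norm_sum_conj_mul_le (u v : ι → ℂ) :
    ‖∑ p, (starRingEnd ℂ) (u p) * v p‖ ≤
      Real.sqrt (∑ p, Complex.normSq (u p)) * Real.sqrt (∑ p, Complex.normSq (v p)) := by
  calc ‖∑ p, (starRingEnd ℂ) (u p) * v p‖
      ≤ ∑ p, ‖u p‖ * ‖v p‖ := by
        simpa only [norm_mul, Complex.norm_conj] using
          norm_sum_le Finset.univ fun p => (starRingEnd ℂ) (u p) * v p
    _ ≤ Real.sqrt (∑ p, ‖u p‖ ^ 2) * Real.sqrt (∑ p, ‖v p‖ ^ 2) :=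
        Real.sum_mul_le_sqrt_mul_sqrt _ (fun p => ‖u p‖) (fun p => ‖v p‖)
    _ = _ := by simp only [Complex.normSq_eq_norm_sq]

theorem norm_sum_conj_mul_div_le_one (u v : ι → ℂ) :
    ‖∑ p, (starRingEnd ℂ) (u p) * v p‖ /
      (Real.sqrt (∑ p, Complex.normSq (u p)) * Real.sqrt (∑ p, Complex.normSq (v p))) ≤ 1 :=
  div_le_one_of_le₀ (norm_sum_conj_mul_le u v) (by positivity)

theorem norm_sum_conj_mul_div_eq_one_of_eq_smul {u v : ι → ℂ} {c : ℂ} (hc : c ≠ 0)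
    (huv : ∀ p, u p = c * v p) (hv : ∃ p, v p ≠ 0) :
    ‖∑ p, (starRingEnd ℂ) (u p) * v p‖ /
      (Real.sqrt (∑ p, Complex.normSq (u p)) * Real.sqrt (∑ p, Complex.normSq (v p))) = 1 := by
  set S := ∑ p, Complex.normSq (v p)
  have hS : 0 < S := by
    obtain ⟨p, hp⟩ := hv
    exact (Complex.normSq_pos.mpr hp).trans_le
      (Finset.single_le_sum (fun q _ => Complex.normSq_nonneg (v q)) (Finset.mem_univ p))
  have hnum : ∑ p, (starRingEnd ℂ) (u p) * v p = (starRingEnd ℂ) c * S := by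
    simp only [huv, map_mul, mul_assoc, ← Finset.mul_sum, S, Complex.ofReal_sum,
      Complex.normSq_eq_conj_mul_self]
  have hden : ∑ p, Complex.normSq (u p) = ‖c‖ ^ 2 * S := by
    simp only [huv, Complex.normSq_mul, ← Finset.mul_sum, Complex.normSq_eq_norm_sq c, S]
  rw [hnum, hden, norm_mul, Complex.norm_conj, Complex.norm_real, Real.norm_of_nonneg hS.le,
    Real.sqrt_mul (by positivity), Real.sqrt_sq (norm_nonneg c), mul_assoc,
    Real.mul_self_sqrt hS.le]
  exact div_self (by positivity)

end Coherence

theorem mutualCoherence_eq_one_of_col_eq_smul {m : ℕ} {ι : Type*} {A : Matrix (Fin m) ι ℂ}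
    {i j : ι} (hij : i ≠ j) {c : ℂ} (hc : c ≠ 0) (hA : ∀ p, A p i = c * A p j)
    (hj : ∃ p, A p j ≠ 0) : mutualCoherence A = 1 := by
  refine IsGreatest.csSup_eq ⟨⟨i, j, hij, ?_⟩, ?_⟩
  · exact (norm_sum_conj_mul_div_eq_one_of_eq_smul hc hA hj).symm
  · rintro _ ⟨i', j', -, rfl⟩
    exact norm_sum_conj_mul_div_le_one _ _

theorem shMatrix_equiangular_full_coherence_general (B m : ℕ)
    (hm₁ : 3 ≤ m) (hm₂ : m ≤ 2 * B - 1) (hmodd : Odd m)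
    (θ φ : Fin m → ℝ)
    (hφ : ∀ p : Fin m, φ p = 2 * Real.pi * (p : ℕ) / ((m : ℝ) - 1))
    (hcols : ∀ i : SHIndex B, ∃ p, shMatrix B θ φ p i ≠ 0) :
    mutualCoherence (shMatrix B θ φ) = 1 ∧
      ∀ l : ℕ, (m - 1) / 2 ≤ l → l ≤ B - 1 →
        ∃ c : ℂ, ∀ p : Fin m,
          sphericalHarmonic l (-(((m - 1) / 2 : ℕ) : ℤ)) (θ p) (φ p) =
            c * sphericalHarmonic l (((m - 1) / 2 : ℕ) : ℤ) (θ p) (φ p) := by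
  obtain ⟨K, rfl⟩ := hmodd
  rw [show (2 * K + 1 - 1) / 2 = K by omega]
  have hK : 0 < K := by omega
  have hsample : ∀ p : Fin (2 * K + 1),
      ((K : ℤ) : ℝ) * φ p = π * (((p : ℕ) : ℤ) : ℝ) := by
    intro p
    rw [hφ p]
    push_cast
    field_simp
    ring
  have hprop : ∀ l, K ≤ l → ∀ p : Fin (2 * K + 1),
      sphericalHarmonic l (-K) (θ p) (φ p) = (-1) ^ K * sphericalHarmonic l K (θ p) (φ p) :=
    fun l hl p => by rw [sphericalHarmonic_neg hl, conj_sphericalHarmonic_of_mul_eq (hsample p)]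
  refine ⟨?_, fun l hl _ => ⟨_, hprop l hl⟩⟩
  have hKB : K < B := by omega
  exact mutualCoherence_eq_one_of_col_eq_smul (i := ⟨⟨K, hKB⟩, -K, by simp⟩)
    (j := ⟨⟨K, hKB⟩, K, by simp⟩) (by simpa using hK.ne') (by simp) (hprop K le_rfl)
    (hcols _)

/-- for an odd number `3 ≤ m ≤ 2B-1` of equiangular azimuth samples
`φ_p = 2π(p-1)/(m-1)`, the spherical-harmonic sensing matrix has mutual coherence `1`;
in particular the two columns of orders `k = ±(m-1)/2` of any common degree
`l ≥ (m-1)/2` are proportional. -/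
theorem shMatrix_equiangular_full_coherence (B m : ℕ) (hB : 2 ≤ B)
    (hm₁ : 3 ≤ m) (hm₂ : m ≤ 2 * B - 1) (hmodd : Odd m)
    (θ φ : Fin m → ℝ) (hθ : ∀ p, θ p ∈ Set.Icc 0 Real.pi)
    (hφ : ∀ p : Fin m, φ p = 2 * Real.pi * (p : ℕ) / ((m : ℝ) - 1))
    (hcols : ∀ i : SHIndex B, ∃ p, shMatrix B θ φ p i ≠ 0) :
    mutualCoherence (shMatrix B θ φ) = 1 ∧
      ∀ l : ℕ, (m - 1) / 2 ≤ l → l ≤ B - 1 →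
        ∃ c : ℂ, ∀ p : Fin m,
          sphericalHarmonic l (-(((m - 1) / 2 : ℕ) : ℤ)) (θ p) (φ p) =
            c * sphericalHarmonic l (((m - 1) / 2 : ℕ) : ℤ) (θ p) (φ p) :=
  shMatrix_equiangular_full_coherence_general B m hm₁ hm₂ hmodd θ φ hφ hcols
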